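/- Absolute continuity of conditioned walks (Lemma 4.1 analogue): let G be a locally finite graph of maximal degree 2d with edge weights ω_e ∈ {1, 1/n}, and let C be the subgraph of weight-1 edges, assumed connected and of minimal degree ≥ 1. For any path x₀,x₁,…,x_n in C, the ratio of (i) the probability that the ω-walk conditioned not to use weight-1/n edges in its first n steps follows this path, and (ii) the probability that the simple random walk on C follows this path, is bounded above and below by constants depending only on d (uniformly in n, the path, and ω). -/
import Mathlib


open scoped BigOperators

attribute [local instance] Classical.propDecidable

/-- Total conductance at a vertex: `π_ω(u) = ∑_v ω_{uv}`. -/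
noncomputable def piOf {V : Type*} (ω : V → V → ℝ) (u : V) : ℝ := ∑' v, ω u v

/-- Degree in the strong subgraph `C` (edges of weight `1`). -/
noncomputable def degC {V : Type*} (ω : V → V → ℝ) (u : V) : ℝ :=
  ∑' v, if ω u v = 1 then (1 : ℝ) else 0

/-- Probability that the `ω`-walk started at `v` uses only weight-one edges during
its first `k` steps. -/
noncomputable def stayStrong {V : Type*} (ω : V → V → ℝ) : ℕ → V → ℝ
  | 0 => fun _ => 1
  | k + 1 => fun v =>
      ∑' w, (if ω v w = 1 then ω v w / piOf ω v else 0) * stayStrong ω k w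

lemma aux_pow_le (d n : ℕ) (hn : 1 ≤ n) :
    ((1:ℝ) + 2*d/n)^n ≤ 9^d := by
  have hn0 : (0:ℝ) < n := by exact_mod_cast hn
  have h1 : (1:ℝ) + 2*d/n ≤ Real.exp (2*d/n) := by
    have := Real.add_one_le_exp (2*(d:ℝ)/n); linarith
  have hbase : (0:ℝ) ≤ 1 + 2*d/n := by positivity
  have h2 : ((1:ℝ)+2*d/n)^n ≤ Real.exp (2*(d:ℝ)/n)^n := pow_le_pow_left₀ hbase h1 n
  have h3 : Real.exp (2*(d:ℝ)/n)^n = Real.exp (2*d) := by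
    rw [← Real.exp_nat_mul]
    congr 1
    field_simp
  have h4 : Real.exp (2*(d:ℝ)) = (Real.exp 1)^(2*d) := by
    rw [← Real.exp_nat_mul]
    congr 1
    push_cast; ring
  have h5 : (Real.exp 1)^(2*d) ≤ 3^(2*d) := by
    apply pow_le_pow_left₀ (Real.exp_pos 1).le
    have := Real.exp_one_lt_d9; linarith
  have h6 : (3:ℝ)^(2*d) = 9^d := by
    rw [pow_mul]; norm_num
  calc ((1:ℝ)+2*d/n)^n ≤ Real.exp (2*(d:ℝ)/n)^n := h2
    _ = Real.exp (2*(d:ℝ)) := h3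
    _ = (Real.exp 1)^(2*d) := h4
    _ ≤ 3^(2*d) := h5
    _ = 9^d := h6

/-- Absolute continuity of the conditioned walk with respect to the simple random walk
on the strong subgraph: for any path `x₀,…,x_n` in `C`, the ratio of (i) the
probability that the `ω`-walk conditioned not to use weight-`1/n` edges in its first
`n` steps follows the path, and (ii) the probability that SRW on `C` follows it, is
bounded above and below by constants depending only on `d`. -/
theorem stmt16 (d : ℕ) (hd : 1 ≤ d) :
    ∃ c₁ c₂ : ℝ, 0 < c₁ ∧ 0 < c₂ ∧
      ∀ (V : Type) (ω : V → V → ℝ) (n : ℕ), 1 ≤ n →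
        (∀ u v, ω u v = ω v u) →
        (∀ u v, ω u v = 0 ∨ ω u v = 1 / n ∨ ω u v = 1) →
        (∀ u, ∃ s : Finset V, (∀ v, ω u v ≠ 0 → v ∈ s) ∧ s.card ≤ 2 * d) →
        (∀ u, 1 ≤ degC ω u) →
        (∀ u v, Relation.ReflTransGen (fun a b => ω a b = 1) u v) →
        (∀ u, 0 < piOf ω u) →
        ∀ xp : Fin (n + 1) → V,
          (∀ i : Fin n, ω (xp i.castSucc) (xp i.succ) = 1) →
          ((∏ i : Fin n, ω (xp i.castSucc) (xp i.succ) / piOf ω (xp i.castSucc)) /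
              stayStrong ω n (xp 0) ≤
            c₂ * ∏ i : Fin n, 1 / degC ω (xp i.castSucc)) ∧
          (c₁ * ∏ i : Fin n, 1 / degC ω (xp i.castSucc) ≤
            (∏ i : Fin n, ω (xp i.castSucc) (xp i.succ) / piOf ω (xp i.castSucc)) /
              stayStrong ω n (xp 0)) := by
  refine ⟨((9:ℝ)^d)⁻¹, (9:ℝ)^d, by positivity, by positivity, ?_⟩
  intro V ω n hn hsym hrange hfin hdeg hconn hpi xp hpath
  have hn0 : (0:ℝ) < n := by exact_mod_cast hn
  set b : ℝ := 1 + 2*d/n with hbdef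
  have hb1 : (1:ℝ) ≤ b := by
    have : (0:ℝ) ≤ 2*d/n := by positivity
    simp [hbdef]; linarith
  have hb0 : (0:ℝ) < b := lt_of_lt_of_le one_pos hb1
  -- nonnegativity of weights
  have hω0 : ∀ u v, 0 ≤ ω u v := by
    intro u v
    rcases hrange u v with h | h | h <;> rw [h] <;> positivity
  choose s hs hscard using hfin
  have hzero : ∀ u v, v ∉ s u → ω u v = 0 := by
    intro u v hv
    by_contra h
    exact hv (hs u v h)
  have hpisum : ∀ u, piOf ω u = ∑ v ∈ s u, ω u v := by
    intro u
    exact tsum_eq_sum (fun v hv => hzero u v hv)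
  have hdegsum : ∀ u, degC ω u = ∑ v ∈ s u, if ω u v = 1 then (1:ℝ) else 0 := by
    intro u
    refine tsum_eq_sum (fun v hv => ?_)
    rw [hzero u v hv]
    norm_num
  have hdegpos : ∀ u, (0:ℝ) < degC ω u := fun u => lt_of_lt_of_le one_pos (hdeg u)
  have hle1 : ∀ u, degC ω u ≤ piOf ω u := by
    intro u
    rw [hdegsum, hpisum]
    refine Finset.sum_le_sum (fun v _ => ?_)
    split_ifs with h
    · rw [h]
    · exact hω0 u v
  have hle3 : ∀ u, piOf ω u ≤ degC ω u * b := by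
    intro u
    have hstep : piOf ω u ≤ degC ω u + 2*d/n := by
      rw [hdegsum, hpisum]
      have h1 : ∀ v ∈ s u, ω u v ≤ (if ω u v = 1 then (1:ℝ) else 0) + 1/n := by
        intro v _
        split_ifs with h
        · rw [h]
          have h1n : (0:ℝ) ≤ 1/n := by positivity
          linarith
        · rcases hrange u v with h' | h' | h'
          · rw [h']; positivity
          · rw [h', zero_add]
          · exact absurd h' h
      calc ∑ v ∈ s u, ω u v
          ≤ ∑ v ∈ s u, ((if ω u v = 1 then (1:ℝ) else 0) + 1/n) :=
            Finset.sum_le_sum h1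
        _ = (∑ v ∈ s u, if ω u v = 1 then (1:ℝ) else 0) + (s u).card * (1/n) := by
            rw [Finset.sum_add_distrib, Finset.sum_const, nsmul_eq_mul]
        _ ≤ (∑ v ∈ s u, if ω u v = 1 then (1:ℝ) else 0) + 2*d/n := by
            have : ((s u).card : ℝ) ≤ 2*d := by exact_mod_cast hscard u
            have h2 : ((s u).card : ℝ) * (1/n) ≤ 2*d/n := by
              rw [div_eq_mul_one_div (2*(d:ℝ)) n]
              apply mul_le_mul_of_nonneg_right this
              positivity
            linarith
    have hd1 : (1:ℝ) ≤ degC ω u := hdeg u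
    have h2dn : (0:ℝ) ≤ 2*d/n := by positivity
    calc piOf ω u ≤ degC ω u + 2*d/n := hstep
      _ ≤ degC ω u + degC ω u * (2*d/n) := by nlinarith
      _ = degC ω u * b := by rw [hbdef]; ring
  have hratio : ∀ u, b⁻¹ ≤ degC ω u / piOf ω u := by
    intro u
    rw [inv_eq_one_div, div_le_div_iff₀ hb0 (hpi u), one_mul]
    exact hle3 u
  have hratio1 : ∀ u, degC ω u / piOf ω u ≤ 1 := by
    intro u
    rw [div_le_one (hpi u)]
    exact hle1 u
  -- the sum of strong transition probabilities
  have hstrongsum : ∀ u, (∑ w ∈ s u, if ω u w = 1 then ω u w / piOf ω u else 0)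
      = degC ω u / piOf ω u := by
    intro u
    rw [hdegsum, Finset.sum_div]
    refine Finset.sum_congr rfl (fun w _ => ?_)
    split_ifs with h
    · rw [h]
    · exact (zero_div _).symm
  -- bounds on stayStrong
  have hstay : ∀ k v, b⁻¹^k ≤ stayStrong ω k v ∧ stayStrong ω k v ≤ 1 := by
    intro k
    induction k with
    | zero => intro v; simp [stayStrong]
    | succ k ih =>
      intro v
      have hrfl : stayStrong ω (k+1) v
          = ∑' w, (if ω v w = 1 then ω v w / piOf ω v else 0) * stayStrong ω k w := rfl
      have hsum : stayStrong ω (k+1) v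
          = ∑ w ∈ s v, (if ω v w = 1 then ω v w / piOf ω v else 0) * stayStrong ω k w := by
        rw [hrfl]
        refine tsum_eq_sum (fun w hw => ?_)
        rw [hzero v w hw]
        norm_num
      have hcoeff0 : ∀ w, 0 ≤ (if ω v w = 1 then ω v w / piOf ω v else 0) := by
        intro w
        split_ifs with h
        · exact div_nonneg (hω0 v w) (hpi v).le
        · exact le_refl 0
      constructor
      · rw [hsum]
        have h1 : ∀ w ∈ s v, (if ω v w = 1 then ω v w / piOf ω v else 0) * b⁻¹^k
            ≤ (if ω v w = 1 then ω v w / piOf ω v else 0) * stayStrong ω k w := by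
          intro w _
          exact mul_le_mul_of_nonneg_left (ih w).1 (hcoeff0 w)
        calc b⁻¹^(k+1) = b⁻¹ * b⁻¹^k := by ring
          _ ≤ (degC ω v / piOf ω v) * b⁻¹^k := by
              apply mul_le_mul_of_nonneg_right (hratio v)
              positivity
          _ = ∑ w ∈ s v, (if ω v w = 1 then ω v w / piOf ω v else 0) * b⁻¹^k := by
              rw [← Finset.sum_mul, hstrongsum v]
          _ ≤ _ := Finset.sum_le_sum h1
      · rw [hsum]
        have h1 : ∀ w ∈ s v, (if ω v w = 1 then ω v w / piOf ω v else 0) * stayStrong ω k w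
            ≤ (if ω v w = 1 then ω v w / piOf ω v else 0) * 1 := by
          intro w _
          exact mul_le_mul_of_nonneg_left (ih w).2 (hcoeff0 w)
        calc ∑ w ∈ s v, (if ω v w = 1 then ω v w / piOf ω v else 0) * stayStrong ω k w
            ≤ ∑ w ∈ s v, (if ω v w = 1 then ω v w / piOf ω v else 0) * 1 :=
              Finset.sum_le_sum h1
          _ = degC ω v / piOf ω v := by simp only [mul_one]; exact hstrongsum v
          _ ≤ 1 := hratio1 v
  -- key numbers
  have hbn : b^n ≤ (9:ℝ)^d := aux_pow_le d n hn
  have hbinv : ((9:ℝ)^d)⁻¹ ≤ b⁻¹^n := by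
    rw [inv_pow]
    exact inv_anti₀ (pow_pos hb0 n) hbn
  obtain ⟨hS1, hS2⟩ := hstay n (xp 0)
  have hSpos : 0 < stayStrong ω n (xp 0) := lt_of_lt_of_le (by positivity) hS1
  -- products
  set Q : ℝ := ∏ i : Fin n, ω (xp i.castSucc) (xp i.succ) / piOf ω (xp i.castSucc) with hQdef
  set P : ℝ := ∏ i : Fin n, 1 / degC ω (xp i.castSucc) with hPdef
  have hQ : Q = ∏ i : Fin n, 1 / piOf ω (xp i.castSucc) := by
    rw [hQdef]
    exact Finset.prod_congr rfl (fun i _ => by rw [hpath i])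
  have hPpos : 0 < P := by
    rw [hPdef]
    exact Finset.prod_pos (fun i _ => one_div_pos.mpr (hdegpos _))
  have hQpos : 0 < Q := by
    rw [hQ]
    exact Finset.prod_pos (fun i _ => one_div_pos.mpr (hpi _))
  have hQle : Q ≤ P := by
    rw [hQ, hPdef]
    refine Finset.prod_le_prod (fun i _ => (one_div_pos.mpr (hpi _)).le)
      (fun i _ => one_div_le_one_div_of_le (hdegpos _) (hle1 _))
  have hQge : b⁻¹^n * P ≤ Q := by
    have hc : b⁻¹^n = ∏ _i : Fin n, b⁻¹ := by
      rw [Finset.prod_const, Finset.card_univ, Fintype.card_fin]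
    rw [hQ, hPdef, hc, ← Finset.prod_mul_distrib]
    refine Finset.prod_le_prod
      (fun i _ => mul_nonneg (by positivity) (one_div_pos.mpr (hdegpos _)).le)
      (fun i _ => ?_)
    rw [mul_one_div, div_le_div_iff₀ (hdegpos _) (hpi _), one_mul]
    have h := mul_le_mul_of_nonneg_left (hle3 (xp i.castSucc)) (inv_nonneg.mpr hb0.le)
    have he : b⁻¹ * (degC ω (xp i.castSucc) * b) = degC ω (xp i.castSucc) := by
      field_simp
    linarith
  constructor
  · -- upper bound
    have hSinv : (stayStrong ω n (xp 0))⁻¹ ≤ (9:ℝ)^d := by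
      have h1 : ((9:ℝ)^d)⁻¹ ≤ stayStrong ω n (xp 0) := le_trans hbinv hS1
      calc (stayStrong ω n (xp 0))⁻¹ ≤ (((9:ℝ)^d)⁻¹)⁻¹ :=
            inv_anti₀ (by positivity) h1
        _ = (9:ℝ)^d := inv_inv _
    calc Q / stayStrong ω n (xp 0) = Q * (stayStrong ω n (xp 0))⁻¹ := div_eq_mul_inv _ _
      _ ≤ P * (9:ℝ)^d := mul_le_mul hQle hSinv (by positivity) hPpos.le
      _ = (9:ℝ)^d * P := mul_comm _ _
  · -- lower bound
    have h1 : Q ≤ Q / stayStrong ω n (xp 0) := by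
      rw [le_div_iff₀ hSpos]
      exact mul_le_of_le_one_right hQpos.le hS2
    calc ((9:ℝ)^d)⁻¹ * P ≤ b⁻¹^n * P := mul_le_mul_of_nonneg_right hbinv hPpos.le
      _ ≤ Q := hQge
      _ ≤ Q / stayStrong ω n (xp 0) := h1
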